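/- arXiv:2012.12357 — 2 statements merged into one kernel-verified Lean document; each statement's English description precedes it below -/
import Mathlib

section
/- Let n be a positive integer and let v : (0,T) × ℝ → ℝ be C^1 in t and C^3 in x, with continuous mixed derivatives v_{tx}, v_{txx}, satisfying (CH_n) pointwise. Then for all (t,x) ∈ (0,T) × ℝ the energy-density identity ∂_t( (v² + v_x²)/2 ) + ∂_x[ ((n+1)/2) v^{n+2} + ((1−n)/2) v^n v_x² − v^{n+1} v_{xx} − v v_{tx} ] = 0 holds. -/
/-!
Multiplying (CH_n) by `v` turns its left-hand side into the time derivative of the energy density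
plus the space derivative of the flux: this is the chain and product rule, together with the
commutation `∂ₓ v_{tx} = v_{txx}` of mixed partial derivatives. The latter follows by writing
`v_x(t, y) = v_x(t, 0) + ∫₀^y v_{xx}(t, z) dz` and differentiating in `t` under the integral sign,
which the continuity of `v_{txx}` allows.
-/

open Real MeasureTheory Filter Topology
open scoped ENNReal

/-- `v_x`. -/
noncomputable def ux (v : ℝ → ℝ → ℝ) (t x : ℝ) : ℝ := deriv (v t) x
/-- `v_{xx}`. -/
noncomputable def uxx (v : ℝ → ℝ → ℝ) (t x : ℝ) : ℝ := deriv (deriv (v t)) x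
/-- `v_{xxx}`. -/
noncomputable def uxxx (v : ℝ → ℝ → ℝ) (t x : ℝ) : ℝ := deriv (deriv (deriv (v t))) x
/-- `v_t`. -/
noncomputable def ut (v : ℝ → ℝ → ℝ) (t x : ℝ) : ℝ := deriv (fun s => v s x) t
/-- `v_{tx}`. -/
noncomputable def utx (v : ℝ → ℝ → ℝ) (t x : ℝ) : ℝ := deriv (fun s => ux v s x) t
/-- `v_{txx}`. -/
noncomputable def utxx (v : ℝ → ℝ → ℝ) (t x : ℝ) : ℝ := deriv (fun s => uxx v s x) t

/-- The equation (CH_n) holds pointwise at `(t,x)`. -/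
def CHn (n : ℕ) (v : ℝ → ℝ → ℝ) (t x : ℝ) : Prop :=
  ut v t x - utxx v t x
      + (((n : ℝ) + 1) * ((n : ℝ) + 2) / 2) * v t x ^ n * ux v t x
    = ((n : ℝ) * ((n : ℝ) - 1) / 2) * v t x ^ (n - 2) * ux v t x ^ 3
      + 2 * (n : ℝ) * v t x ^ (n - 1) * ux v t x * uxx v t x
      + v t x ^ n * uxxx v t x

/-- The open time interval `(0, T)`, where `T ∈ (0, ∞]`. -/
def timeDomainOpen (T : ℝ≥0∞) : Set ℝ := {t : ℝ | 0 < t ∧ ENNReal.ofReal t < T}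

lemma isOpen_timeDomainOpen (T : ℝ≥0∞) : IsOpen (timeDomainOpen T) :=
  isOpen_Ioi.inter (isOpen_Iio.preimage ENNReal.continuous_ofReal)

section MixedPartials

variable {G : ℝ → ℝ → ℝ} {U : Set ℝ} {t : ℝ}

lemma hasDerivAt_intervalIntegral_of_continuousOn_deriv (hU : IsOpen U)
    (hG : ∀ s ∈ U, Continuous (G s))
    (hGt : ∀ y, ∀ s ∈ U, DifferentiableAt ℝ (fun s => G s y) s)
    (hGt_cont : ContinuousOn (fun p : ℝ × ℝ => deriv (fun s => G s p.2) p.1) (U ×ˢ Set.univ))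
    (ht : t ∈ U) (a b : ℝ) :
    HasDerivAt (fun s => ∫ z in a..b, G s z) (∫ z in a..b, deriv (fun s => G s z) t) t := by
  obtain ⟨ε, hε, hball⟩ := Metric.isOpen_iff.1 hU t ht
  have hcb : Metric.closedBall t (ε / 2) ⊆ U :=
    (Metric.closedBall_subset_ball (by linarith)).trans hball
  obtain ⟨C, hC⟩ : ∃ C, ∀ p ∈ Metric.closedBall t (ε / 2) ×ˢ Set.uIcc a b,
      ‖deriv (fun s => G s p.2) p.1‖ ≤ C :=
    ((isCompact_closedBall t _).prod isCompact_uIcc).exists_bound_of_continuousOn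
      (hGt_cont.mono (Set.prod_mono hcb (Set.subset_univ _)))
  have hGt_slice : Continuous fun z => deriv (fun s => G s z) t :=
    hGt_cont.comp_continuous (f := fun z => (t, z)) (by fun_prop) fun z => ⟨ht, Set.mem_univ z⟩
  refine (intervalIntegral.hasDerivAt_integral_of_dominated_loc_of_deriv_le
    (F := G) (F' := fun s z => deriv (fun s => G s z) s)
    (bound := fun _ => C) (Metric.ball_mem_nhds t (half_pos hε)) ?_ ?_
    hGt_slice.aestronglyMeasurable.restrict ?_ intervalIntegrable_const ?_).2
  · filter_upwards [hU.mem_nhds ht] with s hs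
    exact (hG s hs).aestronglyMeasurable.restrict
  · exact (hG t ht).intervalIntegrable _ _
  · exact .of_forall fun z hz s hs =>
      hC (s, z) ⟨Metric.ball_subset_closedBall hs, Set.uIoc_subset_uIcc hz⟩
  · exact .of_forall fun z _ s hs =>
      (hGt z s (hcb (Metric.ball_subset_closedBall hs))).hasDerivAt

theorem hasDerivAt_deriv_of_hasDerivAt_of_continuousOn {F : ℝ → ℝ → ℝ} (hU : IsOpen U)
    (hF : ∀ s ∈ U, ∀ y, HasDerivAt (F s) (G s y) y)
    (hG : ∀ s ∈ U, Continuous (G s))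
    (hFt : ∀ y, ∀ s ∈ U, DifferentiableAt ℝ (fun s => F s y) s)
    (hGt : ∀ y, ∀ s ∈ U, DifferentiableAt ℝ (fun s => G s y) s)
    (hGt_cont : ContinuousOn (fun p : ℝ × ℝ => deriv (fun s => G s p.2) p.1) (U ×ˢ Set.univ))
    (ht : t ∈ U) (x : ℝ) :
    HasDerivAt (fun y => deriv (fun s => F s y) t) (deriv (fun s => G s x) t) x := by
  have hGt_slice : Continuous fun z => deriv (fun s => G s z) t :=
    hGt_cont.comp_continuous (f := fun z => (t, z)) (by fun_prop) fun z => ⟨ht, Set.mem_univ z⟩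
  have hFTC : ∀ y, deriv (fun s => F s y) t
      = deriv (fun s => F s 0) t + ∫ z in (0 : ℝ)..y, deriv (fun s => G s z) t := by
    intro y
    have hint : (fun s => ∫ z in (0 : ℝ)..y, G s z) =ᶠ[𝓝 t] fun s => F s y - F s 0 := by
      filter_upwards [hU.mem_nhds ht] with s hs
      exact intervalIntegral.integral_eq_sub_of_hasDerivAt (fun z _ => hF s hs z)
        ((hG s hs).intervalIntegrable _ _)
    have hdiff : HasDerivAt (fun s => F s y - F s 0)
        (deriv (fun s => F s y) t - deriv (fun s => F s 0) t) t :=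
      (hFt y t ht).hasDerivAt.sub (hFt 0 t ht).hasDerivAt
    have := (hdiff.congr_of_eventuallyEq hint).unique
      (hasDerivAt_intervalIntegral_of_continuousOn_deriv hU hG hGt hGt_cont ht 0 y)
    linarith
  rw [funext hFTC]
  exact (intervalIntegral.integral_hasDerivAt_right (hGt_slice.intervalIntegrable _ _)
    (hGt_slice.stronglyMeasurableAtFilter _ _) hGt_slice.continuousAt).const_add _

end MixedPartials

section SpaceDerivatives

variable {v : ℝ → ℝ → ℝ} {t : ℝ}

lemma hasDerivAt_v (h : ContDiff ℝ 3 (v t)) (y : ℝ) : HasDerivAt (v t) (ux v t y) y :=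
  (h.differentiable (by norm_num) y).hasDerivAt

lemma contDiff_ux (h : ContDiff ℝ 3 (v t)) : ContDiff ℝ 2 (ux v t) :=
  (contDiff_succ_iff_deriv (n := 2).1 h).2.2

lemma contDiff_uxx (h : ContDiff ℝ 3 (v t)) : ContDiff ℝ 1 (uxx v t) :=
  (contDiff_succ_iff_deriv (n := 1).1 (contDiff_ux h)).2.2

lemma hasDerivAt_ux (h : ContDiff ℝ 3 (v t)) (y : ℝ) : HasDerivAt (ux v t) (uxx v t y) y :=
  ((contDiff_ux h).differentiable (by norm_num) y).hasDerivAt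

lemma hasDerivAt_uxx (h : ContDiff ℝ 3 (v t)) (y : ℝ) : HasDerivAt (uxx v t) (uxxx v t y) y :=
  ((contDiff_uxx h).differentiable one_ne_zero y).hasDerivAt

lemma hasDerivAt_energyFlux (n : ℕ) {x : ℝ} (h : ContDiff ℝ 3 (v t))
    (hutx : HasDerivAt (fun y => utx v t y) (utxx v t x) x) :
    HasDerivAt (fun y => (((n : ℝ) + 1) / 2) * v t y ^ (n + 2)
        + ((1 - (n : ℝ)) / 2) * v t y ^ n * ux v t y ^ 2
        - v t y ^ (n + 1) * uxx v t y
        - v t y * utx v t y)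
      (((n : ℝ) + 1) * ((n : ℝ) + 2) / 2 * v t x ^ (n + 1) * ux v t x
        + (1 - (n : ℝ)) / 2 * ((n : ℝ) * v t x ^ (n - 1) * ux v t x ^ 3
          + 2 * v t x ^ n * ux v t x * uxx v t x)
        - (((n : ℝ) + 1) * v t x ^ n * ux v t x * uxx v t x + v t x ^ (n + 1) * uxxx v t x)
        - (ux v t x * utx v t x + v t x * utxx v t x)) x := by
  have hv := hasDerivAt_v h x
  refine (((((hv.fun_pow (n + 2)).const_mul (((n : ℝ) + 1) / 2)).add
    (((hv.fun_pow n).const_mul ((1 - (n : ℝ)) / 2)).fun_mul ((hasDerivAt_ux h x).fun_pow 2))).sub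
    ((hv.fun_pow (n + 1)).fun_mul (hasDerivAt_uxx h x))).sub (hv.fun_mul hutx)).congr_deriv ?_
  simp only [Nat.add_sub_cancel, Nat.reduceSubDiff]
  push_cast
  ring

end SpaceDerivatives

lemma CHn_energy_balance (n : ℕ) {v vx vxx vxxx vt vtx vtxx : ℝ}
    (h : vt - vtxx + (((n : ℝ) + 1) * ((n : ℝ) + 2) / 2) * v ^ n * vx
      = ((n : ℝ) * ((n : ℝ) - 1) / 2) * v ^ (n - 2) * vx ^ 3
        + 2 * (n : ℝ) * v ^ (n - 1) * vx * vxx + v ^ n * vxxx) :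
    v * vt + vx * vtx
      + (((n : ℝ) + 1) * ((n : ℝ) + 2) / 2 * v ^ (n + 1) * vx
        + (1 - (n : ℝ)) / 2 * ((n : ℝ) * v ^ (n - 1) * vx ^ 3 + 2 * v ^ n * vx * vxx)
        - (((n : ℝ) + 1) * v ^ n * vx * vxx + v ^ (n + 1) * vxxx)
        - (vx * vtx + v * vtxx)) = 0 := by
  -- `n = 0, 1` are split off because of the truncated exponents `n - 1` and `n - 2`.
  rcases n with _ | _ | n
  · norm_num at h ⊢
    linear_combination v * h
  · norm_num at h ⊢
    linear_combination v * h
  · simp only [Nat.add_sub_cancel, show n + 2 - 2 = n from rfl] at h ⊢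
    push_cast at h ⊢
    linear_combination v * h

theorem energy_density_identity_general
    (n : ℕ) (T : ℝ≥0∞) (v : ℝ → ℝ → ℝ)
    (hx : ∀ t ∈ timeDomainOpen T, ContDiff ℝ 3 (v t))
    (ht : ∀ x : ℝ, ∀ t ∈ timeDomainOpen T, DifferentiableAt ℝ (fun s => v s x) t)
    (htx : ∀ x : ℝ, ∀ t ∈ timeDomainOpen T, DifferentiableAt ℝ (fun s => ux v s x) t)
    (htxx : ∀ x : ℝ, ∀ t ∈ timeDomainOpen T, DifferentiableAt ℝ (fun s => uxx v s x) t)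
    (hcont_utxx : ContinuousOn (fun p : ℝ × ℝ => utxx v p.1 p.2) (timeDomainOpen T ×ˢ Set.univ))
    (hpde : ∀ t ∈ timeDomainOpen T, ∀ x : ℝ, CHn n v t x) :
    ∀ t ∈ timeDomainOpen T, ∀ x : ℝ,
      deriv (fun s => (v s x ^ 2 + ux v s x ^ 2) / 2) t
        + deriv (fun y => (((n : ℝ) + 1) / 2) * v t y ^ (n + 2)
            + ((1 - (n : ℝ)) / 2) * v t y ^ n * ux v t y ^ 2
            - v t y ^ (n + 1) * uxx v t y
            - v t y * utx v t y) x = 0 := by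
  intro t htd x
  have htime : HasDerivAt (fun s => (v s x ^ 2 + ux v s x ^ 2) / 2)
      (v t x * ut v t x + ux v t x * utx v t x) t := by
    refine ((((ht x t htd).hasDerivAt.fun_pow 2).add
      ((htx x t htd).hasDerivAt.fun_pow 2)).div_const 2).congr_deriv ?_
    simp only [ut, utx]
    ring
  have hutx : HasDerivAt (fun y => utx v t y) (utxx v t x) x :=
    hasDerivAt_deriv_of_hasDerivAt_of_continuousOn (isOpen_timeDomainOpen T)
      (fun s hs => hasDerivAt_ux (hx s hs)) (fun s hs => (contDiff_uxx (hx s hs)).continuous)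
      htx htxx hcont_utxx htd x
  rw [htime.deriv, (hasDerivAt_energyFlux n (hx t htd) hutx).deriv]
  exact CHn_energy_balance n (hpde t htd x)

/-- The energy-density identity
`∂ₜ((v² + v_x²)/2) + ∂ₓ[((n+1)/2) v^{n+2} + ((1-n)/2) vⁿ v_x² - v^{n+1} v_{xx} - v v_{tx}] = 0`
for classical solutions of (CH_n). -/
theorem energy_density_identity
    (n : ℕ) (hn : 0 < n) (T : ℝ≥0∞) (v : ℝ → ℝ → ℝ)
    (hx : ∀ t ∈ timeDomainOpen T, ContDiff ℝ 3 (v t))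
    (ht : ∀ x : ℝ, ∀ t ∈ timeDomainOpen T, DifferentiableAt ℝ (fun s => v s x) t)
    (htx : ∀ x : ℝ, ∀ t ∈ timeDomainOpen T, DifferentiableAt ℝ (fun s => ux v s x) t)
    (htxx : ∀ x : ℝ, ∀ t ∈ timeDomainOpen T, DifferentiableAt ℝ (fun s => uxx v s x) t)
    (hcont_ut : ContinuousOn (fun p : ℝ × ℝ => ut v p.1 p.2) (timeDomainOpen T ×ˢ Set.univ))
    (hcont_utx : ContinuousOn (fun p : ℝ × ℝ => utx v p.1 p.2) (timeDomainOpen T ×ˢ Set.univ))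
    (hcont_utxx : ContinuousOn (fun p : ℝ × ℝ => utxx v p.1 p.2) (timeDomainOpen T ×ˢ Set.univ))
    (hpde : ∀ t ∈ timeDomainOpen T, ∀ x : ℝ, CHn n v t x) :
    ∀ t ∈ timeDomainOpen T, ∀ x : ℝ,
      deriv (fun s => (v s x ^ 2 + ux v s x ^ 2) / 2) t
        + deriv (fun y => (((n : ℝ) + 1) / 2) * v t y ^ (n + 2)
            + ((1 - (n : ℝ)) / 2) * v t y ^ n * ux v t y ^ 2
            - v t y ^ (n + 1) * uxx v t y
            - v t y * utx v t y) x = 0 :=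
  energy_density_identity_general n T v hx ht htx htxx hcont_utxx hpde
end

section
/- Let n be a positive integer, let h : ℝ → ℝ be continuously differentiable, and let ε ∈ {1,−1}. Then the function u(t,x) := h(t) e^{εx} satisfies the equation (CH_n) pointwise on ℝ × ℝ: u_t − u_{txx} + ((n+1)(n+2)/2) u^n u_x = (n(n−1)/2) u^{n−2} u_x³ + 2n u^{n−1} u_x u_{xx} + u^n u_{xxx} for all (t,x). -/
open Real MeasureTheory Filter Topology
open scoped ENNReal

/-! For `ε = ±1` the profile `u = h(t) e^{εx}` satisfies `u_x = εu`, `u_{xx} = u`, `u_{xxx} = εu`.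
Since `u_{xx} = u` for every `t`, `u_{txx}` and `u_t` are the derivative of the same function of `t`,
so the time derivatives cancel, and (CH_n) reduces to the identity
`(n+1)(n+2)/2 = n(n-1)/2 + 2n + 1` of the coefficients of `ε u^{n+1}`. -/

theorem deriv_const_mul_exp_mul (c ε : ℝ) :
    deriv (fun y => c * exp (ε * y)) = fun y => ε * c * exp (ε * y) := by
  funext y
  have hexp := ((hasDerivAt_id y).const_mul ε).exp.const_mul c
  simp only [id_eq, mul_one] at hexp
  rw [hexp.deriv]
  ring

section ExponentialProfile

variable (h : ℝ → ℝ) (ε : ℝ)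

theorem ux_mul_exp_mul (t x : ℝ) :
    ux (fun s y => h s * exp (ε * y)) t x = ε * (h t * exp (ε * x)) := by
  simp only [ux, deriv_const_mul_exp_mul, mul_assoc]

theorem uxx_mul_exp_mul (t x : ℝ) :
    uxx (fun s y => h s * exp (ε * y)) t x = ε ^ 2 * (h t * exp (ε * x)) := by
  simp only [uxx, deriv_const_mul_exp_mul]
  ring

theorem uxxx_mul_exp_mul (t x : ℝ) :
    uxxx (fun s y => h s * exp (ε * y)) t x = ε ^ 3 * (h t * exp (ε * x)) := by
  simp only [uxxx, deriv_const_mul_exp_mul]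
  ring

end ExponentialProfile

theorem utxx_eq_ut_of_uxx_eq {v : ℝ → ℝ → ℝ} {x : ℝ} (hv : ∀ s, uxx v s x = v s x) (t : ℝ) :
    utxx v t x = ut v t x := by
  simp only [utxx, ut, hv]

theorem natCast_mul_pow_sub_one_mul_self (n : ℕ) (u : ℝ) :
    (n : ℝ) * u ^ (n - 1) * u = n * u ^ n := by
  cases n with
  | zero => simp
  | succ m => simp [pow_succ, mul_assoc]

-- `n - 2` is truncated subtraction; for `n < 2` the factor `n (n - 1)` vanishes.
theorem natCast_mul_sub_one_mul_pow_sub_two_mul_pow_three (n : ℕ) (u : ℝ) :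
    (n : ℝ) * (n - 1) * u ^ (n - 2) * u ^ 3 = n * (n - 1) * u ^ (n + 1) := by
  match n with
  | 0 => simp
  | 1 => simp
  | m + 2 => simp only [Nat.add_sub_cancel, mul_assoc _ (u ^ m), ← pow_add]

theorem CHn_of_ux_eq_mul {n : ℕ} {v : ℝ → ℝ → ℝ} {t x ε : ℝ} (hε : ε ^ 2 = 1)
    (hux : ux v t x = ε * v t x) (huxx : uxx v t x = v t x) (huxxx : uxxx v t x = ε * v t x)
    (hutxx : utxx v t x = ut v t x) : CHn n v t x := by
  have hcube := natCast_mul_sub_one_mul_pow_sub_two_mul_pow_three n (v t x)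
  have hsq := natCast_mul_pow_sub_one_mul_self n (v t x)
  rw [CHn, hux, huxx, huxxx, hutxx]
  linear_combination -(ε ^ 3 / 2) * hcube - 2 * ε * v t x * hsq
    - ε * v t x ^ (n + 1) * ((n : ℝ) * (n - 1) / 2) * hε

theorem exponential_profiles_solve_CHn_general
    (n : ℕ) (h : ℝ → ℝ)
    (ε : ℝ) (hε : ε = 1 ∨ ε = -1) :
    ∀ t x : ℝ, CHn n (fun s y => h s * Real.exp (ε * y)) t x := by
  have hε2 : ε ^ 2 = 1 := by rcases hε with rfl | rfl <;> norm_num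
  have huxx : ∀ s y, uxx (fun s y => h s * exp (ε * y)) s y = h s * exp (ε * y) := by
    intro s y
    rw [uxx_mul_exp_mul, hε2, one_mul]
  intro t x
  refine CHn_of_ux_eq_mul hε2 (ux_mul_exp_mul h ε t x) (huxx t x) ?_
    (utxx_eq_ut_of_uxx_eq (huxx · x) t)
  rw [uxxx_mul_exp_mul, pow_succ, hε2, one_mul]

/-- For any `C¹` function `h` and `ε = ±1`, the function
`u(t,x) = h(t) e^{εx}` satisfies (CH_n) pointwise on `ℝ × ℝ`. -/
theorem exponential_profiles_solve_CHn
    (n : ℕ) (hn : 0 < n) (h : ℝ → ℝ) (hh : ContDiff ℝ 1 h)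
    (ε : ℝ) (hε : ε = 1 ∨ ε = -1) :
    ∀ t x : ℝ, CHn n (fun s y => h s * Real.exp (ε * y)) t x :=
  exponential_profiles_solve_CHn_general n h ε hε
end
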